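/- A positive integer n is a leader if and only if n is the smallest positive integer having its defect value (i.e., for every m < n, δ(m) ≠ δ(n)). Moreover, for every positive integer m there is a unique leader n ≤ m with δ(n) = δ(m), and for this leader one has m = n · 3^k for some integer k ≥ 0. -/

import Mathlib

open Real

/-- `Writes n k` means the positive integer `n` can be written using exactly `k` ones
combined by additions and multiplications. -/
inductive Writes : ℕ → ℕ → Prop
  | one : Writes 1 1
  | add {a b m n : ℕ} : Writes a m → Writes b n → Writes (a + b) (m + n)
  | mul {a b m n : ℕ} : Writes a m → Writes b n → Writes (a * b) (m + n)

/-- The integer complexity `‖n‖`: the least number of 1's needed to write `n`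
using additions and multiplications. -/
noncomputable def cpx (n : ℕ) : ℕ := sInf {k | Writes n k}

/-- The defect `δ(n) = ‖n‖ - 3 log₃ n`. -/
noncomputable def defect (n : ℕ) : ℝ := (cpx n : ℝ) - 3 * Real.logb 3 n

/-- A positive integer n is a leader if either 3 ∤ n, or 3 ∣ n and ‖n‖ < 3 + ‖n/3‖. -/
def Leader (n : ℕ) : Prop :=
  0 < n ∧ (¬ (3 ∣ n) ∨ (3 ∣ n ∧ cpx n < 3 + cpx (n / 3)))

/-!
Raising 3 to the defect gives `3 ^ δ(n) = 3 ^ ‖n‖ / n ^ 3`, so `δ(m) = δ(n)` is the integer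
equation `n ^ 3 * 3 ^ ‖m‖ = m ^ 3 * 3 ^ ‖n‖`; comparing 3-adic valuations, `m ≤ n` then forces
`n = m * 3 ^ j`. Since `‖3n‖ ≤ ‖n‖ + 3`, the defect is non-increasing along `n, 3n, 9n, …`, and a
step keeps it constant exactly when `‖3n‖ = ‖n‖ + 3`, i.e. when `3n` is not a leader. So if some
`m < n` shares the defect of `n`, the whole chain from `m` to `n` has that defect and `n` is not a
leader; conversely, dividing by 3 as long as the number is not a leader reaches, within each
defect class, the leader below any of its members.
-/

theorem Writes.self : ∀ n : ℕ, 0 < n → Writes n n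
  | 1, _ => .one
  | n + 1 + 1, _ => .add (Writes.self (n + 1) n.succ_pos) .one

theorem writes_cpx {n : ℕ} (hn : 0 < n) : Writes n (cpx n) :=
  Nat.sInf_mem ⟨n, .self n hn⟩

theorem cpx_le_of_writes {n k : ℕ} (h : Writes n k) : cpx n ≤ k :=
  Nat.sInf_le h

theorem cpx_three_mul_le {n : ℕ} (hn : 0 < n) : cpx (3 * n) ≤ cpx n + 3 := by
  have h3 : Writes 3 3 := .add (.add .one .one) .one
  simpa [add_comm] using cpx_le_of_writes (.mul h3 (writes_cpx hn))

theorem defect_three_mul {n : ℕ} (hn : 0 < n) :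
    defect (3 * n) = defect n + ((cpx (3 * n) : ℝ) - cpx n - 3) := by
  have hlog : logb 3 ((3 * n : ℕ) : ℝ) = 1 + logb 3 n := by
    rw [Nat.cast_mul, logb_mul (by norm_num) (by positivity), Nat.cast_ofNat,
      logb_self_eq_one (by norm_num)]
  rw [defect, defect, hlog]
  ring

theorem defect_three_mul_le {n : ℕ} (hn : 0 < n) : defect (3 * n) ≤ defect n := by
  have : ((cpx (3 * n) : ℕ) : ℝ) ≤ cpx n + 3 := by exact_mod_cast cpx_three_mul_le hn
  rw [defect_three_mul hn]
  linarith

theorem defect_three_mul_eq_iff {n : ℕ} (hn : 0 < n) :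
    defect (3 * n) = defect n ↔ cpx (3 * n) = cpx n + 3 := by
  rw [defect_three_mul hn, add_eq_left, sub_sub, sub_eq_zero]
  exact_mod_cast Iff.rfl

theorem antitone_defect_mul_three_pow {n : ℕ} (hn : 0 < n) :
    Antitone fun j => defect (n * 3 ^ j) := by
  refine antitone_nat_of_succ_le fun j => ?_
  rw [pow_succ, ← mul_assoc, mul_comm]
  exact defect_three_mul_le (by positivity)

theorem three_rpow_defect {n : ℕ} (hn : 0 < n) :
    (3 : ℝ) ^ defect n = 3 ^ cpx n / (n : ℝ) ^ 3 := by
  have hn' : (0 : ℝ) < n := by exact_mod_cast hn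
  rw [defect, rpow_sub (by norm_num), rpow_natCast, mul_comm, rpow_mul (by norm_num),
    rpow_logb (by norm_num) (by norm_num) hn', rpow_ofNat]

theorem defect_eq_defect_iff {m n : ℕ} (hm : 0 < m) (hn : 0 < n) :
    defect m = defect n ↔ n ^ 3 * 3 ^ cpx m = m ^ 3 * 3 ^ cpx n := by
  rw [← rpow_right_inj (by norm_num : (0 : ℝ) < 3) (by norm_num), three_rpow_defect hm,
    three_rpow_defect hn, div_eq_div_iff (by positivity) (by positivity)]
  norm_cast
  rw [mul_comm (3 ^ cpx m), mul_comm (3 ^ cpx n)]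

theorem Nat.exists_eq_mul_pow_of_pow_mul_pow_eq {p e m n a b : ℕ} (hp : p.Prime) (he : e ≠ 0)
    (hm : 0 < m) (hmn : m ≤ n) (h : n ^ e * p ^ a = m ^ e * p ^ b) : ∃ j, n = m * p ^ j := by
  have hn : 0 < n := hm.trans_le hmn
  have hab : a ≤ b := by
    have : m ^ e * p ^ a ≤ m ^ e * p ^ b := h ▸ Nat.mul_le_mul_right _ (Nat.pow_le_pow_left hmn e)
    exact (Nat.pow_le_pow_iff_right hp.one_lt).mp (Nat.le_of_mul_le_mul_left this (by positivity))
  have hval : e * n.factorization p + a = e * m.factorization p + b := by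
    simpa [Nat.factorization_mul, Nat.factorization_pow, hn.ne', hm.ne', hp.ne_zero,
      hp.factorization_self] using congrArg (·.factorization p) h
  have hv : m.factorization p ≤ n.factorization p :=
    Nat.le_of_mul_le_mul_left (by omega) (Nat.pos_of_ne_zero he)
  obtain ⟨j, rfl⟩ : ∃ j, b = a + e * j :=
    ⟨n.factorization p - m.factorization p, by rw [Nat.mul_sub]; omega⟩
  refine ⟨j, Nat.pow_left_injective he (Nat.eq_of_mul_eq_mul_right (pow_pos hp.pos a) (h.trans ?_))⟩
  change m ^ e * p ^ (a + e * j) = (m * p ^ j) ^ e * p ^ a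
  rw [mul_pow, ← pow_mul, pow_add]
  ring

theorem exists_eq_mul_three_pow_of_defect_eq {m n : ℕ} (hm : 0 < m) (hmn : m ≤ n)
    (h : defect m = defect n) : ∃ j, n = m * 3 ^ j :=
  Nat.exists_eq_mul_pow_of_pow_mul_pow_eq Nat.prime_three three_ne_zero hm hmn
    ((defect_eq_defect_iff hm (hm.trans_le hmn)).mp h)

theorem not_leader_iff {n : ℕ} (hn : 0 < n) :
    ¬ Leader n ↔ ∃ k, n = 3 * k ∧ defect n = defect k := by
  simp only [Leader, hn, true_and, not_or, not_not, not_and, not_lt]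
  constructor
  · rintro ⟨⟨k, rfl⟩, hle⟩
    have hk : 0 < k := by omega
    have hge := hle ⟨k, rfl⟩
    rw [Nat.mul_div_cancel_left k three_pos] at hge
    have := cpx_three_mul_le hk
    exact ⟨k, rfl, (defect_three_mul_eq_iff hk).mpr (by omega)⟩
  · rintro ⟨k, rfl, hk⟩
    have hk0 : 0 < k := by omega
    refine ⟨dvd_mul_right 3 k, fun _ => ?_⟩
    rw [Nat.mul_div_cancel_left k three_pos, (defect_three_mul_eq_iff hk0).mp hk, add_comm]

theorem leader_iff_forall_lt_defect_ne {n : ℕ} (hn : 0 < n) :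
    Leader n ↔ ∀ m, 0 < m → m < n → defect m ≠ defect n := by
  refine ⟨fun hL m hm hmn hdef => ?_, fun h => ?_⟩
  · obtain ⟨j, rfl⟩ := exists_eq_mul_three_pow_of_defect_eq hm hmn.le hdef
    obtain ⟨i, rfl⟩ : ∃ i, j = i + 1 :=
      Nat.exists_eq_add_one.mpr (Nat.pos_of_ne_zero (by rintro rfl; simp at hmn))
    have hanti := antitone_defect_mul_three_pow hm
    have h₁ : defect (m * 3 ^ (i + 1)) ≤ defect (m * 3 ^ i) := hanti i.le_succ
    have h₂ : defect (m * 3 ^ i) ≤ defect (m * 3 ^ 0) := hanti i.zero_le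
    rw [pow_zero, mul_one] at h₂
    exact (not_leader_iff hn).mpr ⟨m * 3 ^ i, by ring, by linarith⟩ hL
  · by_contra hL
    obtain ⟨k, rfl, hk⟩ := (not_leader_iff hn).mp hL
    exact h k (by omega) (by omega) hk.symm

theorem Leader.eq_of_defect_eq {m n : ℕ} (hm : Leader m) (hn : Leader n)
    (h : defect m = defect n) : m = n := by
  rcases lt_trichotomy m n with hmn | rfl | hnm
  · exact absurd h ((leader_iff_forall_lt_defect_ne hn.1).mp hn m hm.1 hmn)
  · rfl
  · exact absurd h.symm ((leader_iff_forall_lt_defect_ne hm.1).mp hm n hn.1 hnm)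

theorem exists_leader_defect_eq (m : ℕ) (hm : 0 < m) :
    ∃ n, Leader n ∧ n ≤ m ∧ defect n = defect m ∧ ∃ k, m = n * 3 ^ k := by
  induction m using Nat.strong_induction_on with
  | _ m ih =>
    by_cases hL : Leader m
    · exact ⟨m, hL, le_rfl, rfl, 0, (mul_one m).symm⟩
    obtain ⟨k, rfl, hk⟩ := (not_leader_iff hm).mp hL
    obtain ⟨n, hnL, hnk, hdef, j, rfl⟩ := ih k (by omega) (by omega)
    exact ⟨n, hnL, by omega, hdef.trans hk.symm, j + 1, by ring⟩

/-- n is a leader iff it is the smallest positive integer with its defect value;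
moreover every m ≥ 1 has a unique leader n ≤ m with δ(n) = δ(m), and m = n·3^k. -/
theorem leader_iff_smallest_defect :
    (∀ n : ℕ, 0 < n →
      (Leader n ↔ ∀ m : ℕ, 0 < m → m < n → defect m ≠ defect n)) ∧
    (∀ m : ℕ, 0 < m →
      ∃! n : ℕ, Leader n ∧ n ≤ m ∧ defect n = defect m ∧ ∃ k : ℕ, m = n * 3 ^ k) := by
  refine ⟨fun n hn => leader_iff_forall_lt_defect_ne hn, fun m hm => ?_⟩
  obtain ⟨n, hn⟩ := exists_leader_defect_eq m hm
  exact ⟨n, hn, fun n' hn' => hn'.1.eq_of_defect_eq hn.1 (hn'.2.2.1.trans hn.2.2.1.symm)⟩
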